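/- arXiv:0907.3984 — 4 statements merged into one kernel-verified Lean document; each statement's English description precedes it below -/
import Mathlib

section
/- Let 𝔄 be an amenable Banach algebra and let e ∈ 𝔄 be an idempotent. Then for every ε > 0 and every finite subset F of e𝔄e there exist finitely many elements a₁, b₁, …, a_r, b_r ∈ 𝔄 such that ∑_{k=1}^r a_k b_k = e and ‖∑_{k=1}^r (x a_k ⊗ b_k − a_k ⊗ b_k x)‖_{𝔄 ⊗̂ 𝔄} < ε for all x ∈ F. -/
/-!
Let `R` be an element of `ker Δ` that is a right approximate identity for the finitely many
elements `e ⊗ x - x ⊗ e` (`x ∈ F`), all of which lie in `ker Δ` because `x ∈ eAe`. The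
candidate diagonal is `m = e ⊗ e - (e ⊗ e) R`, computed in `A ⊗ Aᵒᵖ`. Since `Δ` is a module
map, `Δ m = e - e Δ(R) e = e`. For `x ∈ eAe` one has `x ⊗ e = (x ⊗ e)(e ⊗ e)` and
`e ⊗ x = (e ⊗ x)(e ⊗ e)`, so the commutator `x · m - m · x` for the bimodule action
`x · (a ⊗ b) · y = x a ⊗ b y` equals
`(e ⊗ x - x ⊗ e) R - (e ⊗ x - x ⊗ e)`, whose projective norm is `< ε`.
-/

open scoped TensorProduct

variable (A : Type*) [NonUnitalNormedRing A] [NormedSpace ℂ A]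
  [IsScalarTower ℂ A A] [SMulCommClass ℂ A A]

/-- The multiplication of `A ⊗ Aᵒᵖ` on the algebraic tensor product:
`(a ⊗ b) • (c ⊗ d) = (a * c) ⊗ (d * b)`. -/
noncomputable def opMul : (A ⊗[ℂ] A) →ₗ[ℂ] (A ⊗[ℂ] A) →ₗ[ℂ] (A ⊗[ℂ] A) :=
  TensorProduct.lift <|
    LinearMap.compl₂
      ((TensorProduct.mapBilinear (RingHom.id ℂ) A A A A).comp (LinearMap.mul ℂ A))
      ((LinearMap.mul ℂ A).flip)

/-- The projective tensor norm of an element of the algebraic tensor product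
`A ⊗ A`: the infimum of `∑ ‖aₖ‖ ‖bₖ‖` over all representations `∑ aₖ ⊗ bₖ`. -/
noncomputable def projNorm (u : A ⊗[ℂ] A) : ℝ :=
  sInf { c : ℝ | ∃ l : List (A × A),
    (l.map fun p => p.1 ⊗ₜ[ℂ] p.2).sum = u ∧ (l.map fun p => ‖p.1‖ * ‖p.2‖).sum = c }

/-- Amenability of the Banach algebra `A`, following Helemskiĭ's
characterization: `A` has a bounded approximate identity, and the left ideal
`ker Δ` of `A ⊗̂ Aᵒᵖ` has a bounded right approximate identity. -/
def IsAmenable : Prop :=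
  (∃ C > (0 : ℝ), ∀ ε > (0 : ℝ), ∀ S : Finset A, ∃ e : A, ‖e‖ ≤ C ∧
      ∀ x ∈ S, ‖e * x - x‖ < ε ∧ ‖x * e - x‖ < ε) ∧
  (∃ C > (0 : ℝ), ∀ ε > (0 : ℝ), ∀ S : Finset (A ⊗[ℂ] A),
      (∀ u ∈ S, u ∈ LinearMap.ker (LinearMap.mul' ℂ A)) →
      ∃ r ∈ LinearMap.ker (LinearMap.mul' ℂ A), projNorm A r ≤ C ∧
        ∀ u ∈ S, projNorm A (opMul A u r - u) < ε)

theorem TensorProduct.exists_fin_sum_tmul {R M N : Type*} [CommSemiring R] [AddCommMonoid M]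
    [AddCommMonoid N] [Module R M] [Module R N] (u : M ⊗[R] N) :
    ∃ (r : ℕ) (a : Fin r → M) (b : Fin r → N), u = ∑ k, a k ⊗ₜ[R] b k := by
  induction u using TensorProduct.induction_on with
  | zero => exact ⟨0, Fin.elim0, Fin.elim0, by simp⟩
  | tmul x y => exact ⟨1, fun _ => x, fun _ => y, by simp⟩
  | add u v hu hv =>
    obtain ⟨r, a, b, rfl⟩ := hu
    obtain ⟨s, c, d, rfl⟩ := hv
    exact ⟨r + s, Fin.append a c, Fin.append b d, by simp [Fin.sum_univ_add]⟩

section OpMul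

open LinearMap

@[simp]
lemma opMul_tmul (a b c d : A) :
    opMul A (a ⊗ₜ[ℂ] b) (c ⊗ₜ[ℂ] d) = (a * c) ⊗ₜ[ℂ] (d * b) := by
  simp [opMul, TensorProduct.mapBilinear]

lemma mul'_opMul_tmul (a b : A) (v : A ⊗[ℂ] A) :
    mul' ℂ A (opMul A (a ⊗ₜ[ℂ] b) v) = a * mul' ℂ A v * b := by
  induction v using TensorProduct.induction_on with
  | zero => simp
  | tmul c d => simp [mul_assoc]
  | add u v hu hv => simp [hu, hv, mul_add, add_mul]

lemma opMul_tmul_eq_rTensor_mulLeft {x e : A} (hx : x * e = x) (v : A ⊗[ℂ] A) :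
    opMul A (x ⊗ₜ[ℂ] e) v = (mulLeft ℂ x).rTensor A (opMul A (e ⊗ₜ[ℂ] e) v) := by
  induction v using TensorProduct.induction_on with
  | zero => simp
  | tmul c d => simp [← mul_assoc, hx]
  | add u v hu hv => simp [hu, hv]

lemma opMul_tmul_eq_lTensor_mulRight {x e : A} (hx : e * x = x) (v : A ⊗[ℂ] A) :
    opMul A (e ⊗ₜ[ℂ] x) v = (mulRight ℂ x).lTensor A (opMul A (e ⊗ₜ[ℂ] e) v) := by
  induction v using TensorProduct.induction_on with
  | zero => simp
  | tmul c d => simp [mul_assoc, hx]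
  | add u v hu hv => simp [hu, hv]

lemma tmul_sub_tmul_mem_ker_mul' {x e : A} (hxe : x * e = x) (hex : e * x = x) :
    e ⊗ₜ[ℂ] x - x ⊗ₜ[ℂ] e ∈ ker (mul' ℂ A) := by
  simp [hxe, hex]

/-- `(e ⊗ e)(1 - R)` in the unitization of `A ⊗ Aᵒᵖ`. -/
noncomputable def cornerDiagonal (e : A) (R : A ⊗[ℂ] A) : A ⊗[ℂ] A :=
  e ⊗ₜ[ℂ] e - opMul A (e ⊗ₜ[ℂ] e) R

lemma mul'_cornerDiagonal {e : A} (he : e * e = e) {R : A ⊗[ℂ] A} (hR : R ∈ ker (mul' ℂ A)) :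
    mul' ℂ A (cornerDiagonal A e R) = e := by
  rw [mem_ker] at hR
  simp [cornerDiagonal, mul'_opMul_tmul, hR, he]

lemma rTensor_mulLeft_sub_lTensor_mulRight_cornerDiagonal {x e : A} (hxe : x * e = x)
    (hex : e * x = x) (R : A ⊗[ℂ] A) :
    (mulLeft ℂ x).rTensor A (cornerDiagonal A e R) -
        (mulRight ℂ x).lTensor A (cornerDiagonal A e R) =
      opMul A (e ⊗ₜ[ℂ] x - x ⊗ₜ[ℂ] e) R - (e ⊗ₜ[ℂ] x - x ⊗ₜ[ℂ] e) := by
  simp only [cornerDiagonal, map_sub, LinearMap.sub_apply, rTensor_tmul, lTensor_tmul,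
    mulLeft_apply, mulRight_apply, hxe, hex, ← opMul_tmul_eq_rTensor_mulLeft A hxe,
    ← opMul_tmul_eq_lTensor_mulRight A hex]
  abel

end OpMul

theorem amenable_diagonal (hA : IsAmenable A)
    (e : A) (he : e * e = e) (ε : ℝ) (hε : 0 < ε) (F : Finset A)
    (hF : ∀ x ∈ F, ∃ y : A, x = e * y * e) :
    ∃ (r : ℕ) (a b : Fin r → A),
      (∑ k, a k * b k = e) ∧
      ∀ x ∈ F,
        projNorm A (∑ k, ((x * a k) ⊗ₜ[ℂ] b k - a k ⊗ₜ[ℂ] (b k * x))) < ε := by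
  classical
  have hFe : ∀ x ∈ F, x * e = x ∧ e * x = x := by
    intro x hx
    obtain ⟨y, rfl⟩ := hF x hx
    exact ⟨by rw [mul_assoc, he], by rw [← mul_assoc, ← mul_assoc, he]⟩
  obtain ⟨-, C, -, hbrai⟩ := hA
  obtain ⟨R, hR, -, hRF⟩ := hbrai ε hε (F.image fun x => e ⊗ₜ[ℂ] x - x ⊗ₜ[ℂ] e) <|
    Finset.forall_mem_image.mpr fun x hx => tmul_sub_tmul_mem_ker_mul' A (hFe x hx).1 (hFe x hx).2
  obtain ⟨r, a, b, hab⟩ := TensorProduct.exists_fin_sum_tmul (cornerDiagonal A e R)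
  refine ⟨r, a, b, ?_, fun x hx => ?_⟩
  · simpa [hab] using mul'_cornerDiagonal A he hR
  · obtain ⟨hxe, hex⟩ := hFe x hx
    have hcomm := rTensor_mulLeft_sub_lTensor_mulRight_cornerDiagonal A hxe hex R
    simp only [hab, map_sum, LinearMap.rTensor_tmul, LinearMap.lTensor_tmul,
      LinearMap.mulLeft_apply, LinearMap.mulRight_apply, ← Finset.sum_sub_distrib] at hcomm
    rw [hcomm]
    exact hRF _ (Finset.mem_image_of_mem _ hx)
end

section
/- Let q ∈ (1, ∞). There is a constant C_q > 0 such that the q-summing norm of the identity operator on the N-dimensional Hilbert space ℓ²_N satisfies π_q(id_{ℓ²_N}) ≤ C_q √N for all N ∈ ℕ. -/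
/-- The "weak `q`-norm" of a finite family `x`: the supremum over functionals
`f` in the unit ball of `E*` of `(∑ᵢ |⟨xᵢ, f⟩|^q)^{1/q}`. -/
noncomputable def weakNorm (q : ℝ) {E : Type*} [NormedAddCommGroup E]
    [NormedSpace ℂ E] {m : ℕ} (x : Fin m → E) : ℝ :=
  ⨆ f : {f : E →L[ℂ] ℂ // ‖f‖ ≤ 1},
    (∑ i, ‖(f : E →L[ℂ] ℂ) (x i)‖ ^ q) ^ (1 / q)

/-- The `q`-summing norm `π_q(T)` of a bounded operator `T : E → F`. -/
noncomputable def summingNorm (q : ℝ) {E F : Type*} [NormedAddCommGroup E]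
    [NormedSpace ℂ E] [NormedAddCommGroup F] [NormedSpace ℂ F]
    (T : E →L[ℂ] F) : ℝ :=
  sInf { K : ℝ | 0 ≤ K ∧ ∀ (m : ℕ) (x : Fin m → E),
    (∑ i, ‖T (x i)‖ ^ q) ^ (1 / q) ≤ K * weakNorm q x }

/-!
Average over the `2 ^ N` sign vectors `ε ∈ {±1}^N`. The functionals `x ↦ ⟪ε, x⟫ / √N` lie in
the unit ball of the dual, and Khintchine's inequality `‖x‖ ^ q ≤ √3 · 𝔼_ε |⟪ε, x⟫| ^ q` gives
`∑ᵢ ‖xᵢ‖ ^ q ≤ √3 · N ^ (q / 2) · 𝔼_ε ∑ᵢ |⟪ε, xᵢ⟫ / √N| ^ q`, which is at most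
`√3 · N ^ (q / 2) · weakNorm q x ^ q`.
Khintchine's lower bound follows from the second and fourth moments of `∑ₖ εₖ aₖ`, which are
computed by induction on `N` from the parallelogram law: for `q ≥ 2` Jensen suffices, for
`q < 2` Hölder interpolates the second moment between the `q / 2`-th and the fourth.
-/

open Finset

section SignSums

variable {E : Type*}

def signSum [AddCommGroup E] {N : ℕ} (a : Fin N → E) (s : Fin N → Bool) : E :=
  ∑ k, if s k then a k else -a k

lemma sum_fun_fin_succ {N : ℕ} {M : Type*} [AddCommMonoid M] (F : (Fin (N + 1) → Bool) → M) :
    ∑ s, F s = ∑ t : Fin N → Bool, ∑ b : Bool, F (Fin.cons b t) := by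
  rw [← (Fin.consEquiv fun _ => Bool).sum_comp F, Fintype.sum_prod_type, Finset.sum_comm]
  rfl

lemma signSum_cons [AddCommGroup E] {N : ℕ} (a : Fin (N + 1) → E) (b : Bool) (t : Fin N → Bool) :
    signSum a (Fin.cons b t) = signSum (Fin.tail a) t + if b then a 0 else -a 0 := by
  simp [signSum, Fin.sum_univ_succ, Fin.tail, add_comm]

variable [NormedAddCommGroup E] [InnerProductSpace ℝ E]

lemma sum_norm_sq_signSum {N : ℕ} (a : Fin N → E) :
    ∑ s, ‖signSum a s‖ ^ 2 = 2 ^ N * ∑ k, ‖a k‖ ^ 2 := by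
  induction N with
  | zero => simp [signSum]
  | succ N ih =>
    have hcons (t : Fin N → Bool) : ∑ b : Bool, ‖signSum a (Fin.cons b t)‖ ^ 2 =
        2 * ‖signSum (Fin.tail a) t‖ ^ 2 + 2 * ‖a 0‖ ^ 2 := by
      simp only [Fintype.sum_bool, signSum_cons, if_true, Bool.false_eq_true, if_false,
        ← sub_eq_add_neg, parallelogram_law_with_norm ℝ]
      ring
    rw [sum_fun_fin_succ, Finset.sum_congr rfl fun t _ => hcons t, Finset.sum_add_distrib,
      ← Finset.mul_sum, ih, Finset.sum_const, Fin.sum_univ_succ]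
    simp only [Fin.tail, card_univ, Fintype.card_fun, Fintype.card_bool, Fintype.card_fin,
      nsmul_eq_mul, Nat.cast_pow, Nat.cast_ofNat]
    ring

lemma norm_add_pow_four_add_norm_sub_pow_four_le (w z : E) :
    ‖w + z‖ ^ 4 + ‖w - z‖ ^ 4 ≤ 2 * ‖w‖ ^ 4 + 12 * ‖w‖ ^ 2 * ‖z‖ ^ 2 + 2 * ‖z‖ ^ 4 := by
  have hinner : inner ℝ w z ^ 2 ≤ ‖w‖ ^ 2 * ‖z‖ ^ 2 := by
    rw [← mul_pow, ← sq_abs]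
    exact pow_le_pow_left₀ (abs_nonneg _) (abs_real_inner_le_norm w z) 2
  have hadd := norm_add_sq_real w z
  have hsub := norm_sub_sq_real w z
  calc ‖w + z‖ ^ 4 + ‖w - z‖ ^ 4 = (‖w + z‖ ^ 2) ^ 2 + (‖w - z‖ ^ 2) ^ 2 := by ring
    _ ≤ _ := by rw [hadd, hsub]; nlinarith

lemma sum_norm_pow_four_signSum_le {N : ℕ} (a : Fin N → E) :
    ∑ s, ‖signSum a s‖ ^ 4 ≤ 3 * 2 ^ N * (∑ k, ‖a k‖ ^ 2) ^ 2 := by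
  induction N with
  | zero => simp [signSum]
  | succ N ih =>
    have hcons (t : Fin N → Bool) : ∑ b : Bool, ‖signSum a (Fin.cons b t)‖ ^ 4 ≤
        2 * ‖signSum (Fin.tail a) t‖ ^ 4 + 12 * ‖signSum (Fin.tail a) t‖ ^ 2 * ‖a 0‖ ^ 2 +
          2 * ‖a 0‖ ^ 4 := by
      simp only [Fintype.sum_bool, signSum_cons, if_true, Bool.false_eq_true, if_false,
        ← sub_eq_add_neg]
      exact norm_add_pow_four_add_norm_sub_pow_four_le _ _
    have hsq := sum_norm_sq_signSum (Fin.tail a)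
    have hfour := ih (Fin.tail a)
    rw [sum_fun_fin_succ]
    refine (Finset.sum_le_sum fun t _ => hcons t).trans ?_
    simp only [Finset.sum_add_distrib, ← Finset.mul_sum, ← Finset.sum_mul, hsq, Finset.sum_const,
      card_univ, Fintype.card_fun, Fintype.card_bool, Fintype.card_fin, nsmul_eq_mul,
      Fin.sum_univ_succ, Nat.cast_pow, Nat.cast_ofNat]
    simp only [Fin.tail] at hfour ⊢
    have hN : (0 : ℝ) ≤ 2 ^ N := by positivity
    rw [pow_succ (2 : ℝ) N]
    nlinarith [mul_nonneg hN (pow_nonneg (sq_nonneg ‖a 0‖) 2)]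

end SignSums

lemma sum_le_sum_rpow_mul_sum_sq {ι : Type*} (s : Finset ι) {u : ι → ℝ}
    (hu : ∀ i, 0 ≤ u i) {p : ℝ} (hp1 : p < 1) :
    ∑ i ∈ s, u i ≤ (∑ i ∈ s, u i ^ p) ^ (2 - p)⁻¹ * (∑ i ∈ s, u i ^ 2) ^ ((1 - p) / (2 - p)) := by
  have hr : 1 ≤ (2 - p) / (1 - p) := by rw [one_le_div₀ (by linarith)]; linarith
  have hsplit (i : ι) : u i ^ p * u i ^ (1 - p) = u i := by
    rw [← Real.rpow_add' (hu i) (by norm_num), add_sub_cancel, Real.rpow_one]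
  have hsq (i : ι) : u i ^ p * (u i ^ (1 - p)) ^ ((2 - p) / (1 - p)) = u i ^ 2 := by
    rw [← Real.rpow_mul (hu i), mul_div_cancel₀ _ (by linarith), ← Real.rpow_add' (hu i)
      (by norm_num), add_sub_cancel, Real.rpow_two]
  have hexp : 1 - (1 - p) / (2 - p) = (2 - p)⁻¹ := by
    field_simp [show 1 - p ≠ 0 by linarith, show 2 - p ≠ 0 by linarith]
    ring
  have := Real.inner_le_weight_mul_Lp_of_nonneg s hr (fun i => u i ^ p) (fun i => u i ^ (1 - p))
    (fun i => Real.rpow_nonneg (hu i) _) (fun i => Real.rpow_nonneg (hu i) _)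
  simpa only [hsplit, hsq, hexp, inv_div] using this

lemma card_mul_rpow_le_sum_rpow {ι : Type*} [Fintype ι] {u : ι → ℝ} (hu : ∀ i, 0 ≤ u i)
    {σ : ℝ} (hσ : 0 ≤ σ) (hsum : ∑ i, u i = Fintype.card ι * σ) {p : ℝ} (hp : 1 ≤ p) :
    Fintype.card ι * σ ^ p ≤ ∑ i, u i ^ p := by
  rcases (Fintype.card ι).eq_zero_or_pos with hι | hι
  · simpa [hι] using sum_nonneg fun i _ => Real.rpow_nonneg (hu i) p
  have hM : (0 : ℝ) < Fintype.card ι := by exact_mod_cast hι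
  have hjensen := Real.rpow_sum_le_const_mul_sum_rpow_of_nonneg univ hp fun i _ => hu i
  rw [hsum, card_univ, Real.mul_rpow hM.le hσ, Real.rpow_sub_one hM.ne'] at hjensen
  have hMp : 0 < (Fintype.card ι : ℝ) ^ p := Real.rpow_pos_of_pos hM p
  refine le_of_mul_le_mul_left ?_ hMp
  calc (Fintype.card ι : ℝ) ^ p * (Fintype.card ι * σ ^ p)
      = Fintype.card ι * ((Fintype.card ι : ℝ) ^ p * σ ^ p) := by ring
    _ ≤ Fintype.card ι * ((Fintype.card ι : ℝ) ^ p / Fintype.card ι * ∑ i, u i ^ p) := by gcongr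
    _ = (Fintype.card ι : ℝ) ^ p * ∑ i, u i ^ p := by field_simp

lemma mul_rpow_le_of_sum_sq_le {ι : Type*} (s : Finset ι) {u : ι → ℝ} (hu : ∀ i, 0 ≤ u i)
    {M σ c : ℝ} (hM : 0 ≤ M) (hσ : 0 ≤ σ) (hc : 0 ≤ c) (hsum : ∑ i ∈ s, u i = M * σ)
    (hsq : ∑ i ∈ s, u i ^ 2 ≤ c * M * σ ^ 2) {p : ℝ} (hp0 : 0 < p) (hp1 : p < 1) :
    M * σ ^ p ≤ c ^ (1 - p) * ∑ i ∈ s, u i ^ p := by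
  have hX : 0 ≤ ∑ i ∈ s, u i ^ p := sum_nonneg fun i _ => Real.rpow_nonneg (hu i) p
  rcases (mul_nonneg hM hσ).eq_or_lt with hMσ | hMσ
  · rcases mul_eq_zero.1 hMσ.symm with rfl | rfl
    · rw [zero_mul]; positivity
    · rw [Real.zero_rpow hp0.ne', mul_zero]; positivity
  have hM' : 0 < M := pos_of_mul_pos_left hMσ hσ
  have hσ' : 0 < σ := pos_of_mul_pos_right hMσ hM
  have h2p : 0 < 2 - p := by linarith
  have hholder := (sum_le_sum_rpow_mul_sum_sq s hu hp1).trans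
    (mul_le_mul_of_nonneg_left (Real.rpow_le_rpow (sum_nonneg fun i _ => sq_nonneg (u i)) hsq
      (div_nonneg (by linarith) h2p.le)) (Real.rpow_nonneg hX _))
  rw [hsum] at hholder
  have hraised := Real.rpow_le_rpow hMσ.le hholder h2p.le
  rw [Real.mul_rpow (Real.rpow_nonneg hX _) (Real.rpow_nonneg (by positivity) _),
    ← Real.rpow_mul hX, ← Real.rpow_mul (by positivity), inv_mul_cancel₀ h2p.ne',
    div_mul_cancel₀ _ h2p.ne', Real.rpow_one] at hraised
  have hK : 0 < (M * σ ^ 2) ^ (1 - p) := by positivity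
  have hleft : (M * σ) ^ (2 - p) = M * σ ^ p * (M * σ ^ 2) ^ (1 - p) := by
    have hsplit : σ ^ p * σ ^ (1 - p) = σ := by
      rw [← Real.rpow_add hσ', add_sub_cancel, Real.rpow_one]
    rw [show M * σ ^ 2 = M * σ * σ by ring, Real.mul_rpow hMσ.le hσ,
      show 2 - p = 1 + (1 - p) by ring, Real.rpow_add hMσ, Real.rpow_one]
    linear_combination -(M * (M * σ) ^ (1 - p)) * hsplit
  have hright : (c * M * σ ^ 2) ^ (1 - p) = c ^ (1 - p) * (M * σ ^ 2) ^ (1 - p) := by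
    rw [mul_assoc, Real.mul_rpow hc (by positivity)]
  rw [hleft, hright] at hraised
  nlinarith

lemma two_pow_mul_rpow_le_sum_norm_signSum_rpow {E : Type*} [NormedAddCommGroup E]
    [InnerProductSpace ℝ E] {N : ℕ} (a : Fin N → E) {q : ℝ} (hq : 1 ≤ q) :
    2 ^ N * (∑ k, ‖a k‖ ^ 2) ^ (q / 2) ≤ √3 * ∑ s, ‖signSum a s‖ ^ q := by
  have hu (s : Fin N → Bool) : 0 ≤ ‖signSum a s‖ ^ 2 := sq_nonneg _
  have hσ : 0 ≤ ∑ k, ‖a k‖ ^ 2 := sum_nonneg fun k _ => sq_nonneg _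
  have hpow (s : Fin N → Bool) : (‖signSum a s‖ ^ 2) ^ (q / 2) = ‖signSum a s‖ ^ q := by
    rw [← Real.rpow_natCast, ← Real.rpow_mul (norm_nonneg _)]
    ring_nf
  simp only [← hpow]
  rcases le_or_gt 2 q with hq2 | hq2
  · have hcard : ((Fintype.card (Fin N → Bool) : ℕ) : ℝ) = 2 ^ N := by simp
    have h := card_mul_rpow_le_sum_rpow hu hσ (by rw [hcard, sum_norm_sq_signSum])
      (p := q / 2) (by linarith)
    rw [hcard] at h
    exact h.trans (le_mul_of_one_le_left (sum_nonneg fun s _ => by positivity)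
      (Real.one_le_sqrt.2 (by norm_num)))
  · have hfour : ∑ s, (‖signSum a s‖ ^ 2) ^ 2 ≤ 3 * 2 ^ N * (∑ k, ‖a k‖ ^ 2) ^ 2 := by
      simpa only [← pow_mul] using sum_norm_pow_four_signSum_le a
    have h := mul_rpow_le_of_sum_sq_le univ hu (by positivity) hσ (by norm_num : (0 : ℝ) ≤ 3)
      (sum_norm_sq_signSum a) hfour (p := q / 2) (by linarith) (by linarith)
    have hthree : (3 : ℝ) ^ (1 - q / 2) ≤ √3 := by
      rw [Real.sqrt_eq_rpow]
      exact Real.rpow_le_rpow_of_exponent_le (by norm_num) (by linarith)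
    exact h.trans (mul_le_mul_of_nonneg_right hthree (sum_nonneg fun s _ => by positivity))

section WeakNorm

variable {E : Type*} [NormedAddCommGroup E] [NormedSpace ℂ E] {q : ℝ} {m : ℕ}

lemma weakNorm_nonneg (x : Fin m → E) : 0 ≤ weakNorm q x :=
  Real.iSup_nonneg fun _ => Real.rpow_nonneg (sum_nonneg fun _ _ => by positivity) _

lemma bddAbove_weakNorm_range (hq : 0 < q) (x : Fin m → E) :
    BddAbove (Set.range fun f : {f : E →L[ℂ] ℂ // ‖f‖ ≤ 1} =>
      (∑ i, ‖(f : E →L[ℂ] ℂ) (x i)‖ ^ q) ^ (1 / q)) := by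
  refine ⟨(∑ i, ‖x i‖ ^ q) ^ (1 / q), ?_⟩
  rintro _ ⟨f, rfl⟩
  refine Real.rpow_le_rpow (sum_nonneg fun _ _ => by positivity)
    (sum_le_sum fun i _ => ?_) (by positivity)
  exact Real.rpow_le_rpow (norm_nonneg _)
    ((f.1.le_opNorm _).trans (mul_le_of_le_one_left (norm_nonneg _) f.2)) hq.le

lemma sum_norm_rpow_le_weakNorm_rpow (hq : 0 < q) (x : Fin m → E) {f : E →L[ℂ] ℂ}
    (hf : ‖f‖ ≤ 1) : ∑ i, ‖f (x i)‖ ^ q ≤ weakNorm q x ^ q := by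
  have h : (∑ i, ‖f (x i)‖ ^ q) ^ (1 / q) ≤ weakNorm q x :=
    le_ciSup (bddAbove_weakNorm_range hq x) ⟨f, hf⟩
  rwa [one_div, Real.rpow_inv_le_iff_of_pos (sum_nonneg fun _ _ => by positivity)
    (weakNorm_nonneg x) hq] at h

lemma sum_norm_rpow_le_opNorm_mul_weakNorm_rpow (hq : 0 < q) (x : Fin m → E)
    (g : E →L[ℂ] ℂ) : ∑ i, ‖g (x i)‖ ^ q ≤ (‖g‖ * weakNorm q x) ^ q := by
  rcases eq_or_ne g 0 with rfl | hg
  · simp [Real.zero_rpow hq.ne']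
  have hg' : 0 < ‖g‖ := norm_pos_iff.2 hg
  have hunit : ‖(‖g‖⁻¹ : ℂ) • g‖ ≤ 1 := by
    rw [norm_smul, norm_inv, Complex.norm_real, Real.norm_of_nonneg hg'.le, inv_mul_cancel₀ hg'.ne']
  have h := sum_norm_rpow_le_weakNorm_rpow hq x hunit
  simp only [smul_apply, norm_smul, norm_inv, Complex.norm_real,
    Real.norm_of_nonneg hg'.le, Real.mul_rpow (inv_nonneg.2 hg'.le) (norm_nonneg _),
    ← mul_sum] at h
  rw [Real.mul_rpow hg'.le (weakNorm_nonneg x)]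
  rwa [Real.inv_rpow hg'.le, inv_mul_le_iff₀ (by positivity)] at h

end WeakNorm

lemma summingNorm_le {E F : Type*} [NormedAddCommGroup E] [NormedSpace ℂ E]
    [NormedAddCommGroup F] [NormedSpace ℂ F] {q : ℝ} (T : E →L[ℂ] F) {K : ℝ} (hK : 0 ≤ K)
    (h : ∀ (m : ℕ) (x : Fin m → E), (∑ i, ‖T (x i)‖ ^ q) ^ (1 / q) ≤ K * weakNorm q x) :
    summingNorm q T ≤ K :=
  csInf_le ⟨0, fun _ hK => hK.1⟩ ⟨hK, h⟩

section Euclidean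

variable {N : ℕ}

def signVector (s : Fin N → Bool) : EuclideanSpace ℂ (Fin N) :=
  WithLp.toLp 2 fun k => if s k then 1 else -1

lemma norm_signVector (s : Fin N → Bool) : ‖signVector s‖ = √N := by
  have hk (k : Fin N) : ‖(signVector s) k‖ ^ 2 = 1 := by
    by_cases h : s k <;> simp [signVector, h]
  simp [EuclideanSpace.norm_eq, hk]

lemma inner_signVector (s : Fin N → Bool) (x : EuclideanSpace ℂ (Fin N)) :
    inner ℂ (signVector s) x = signSum (fun k => x k) s := by
  refine (PiLp.inner_apply _ _).trans (sum_congr rfl fun k _ => ?_)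
  by_cases h : s k <;> simp [signVector, h]

lemma sum_norm_rpow_euclidean_le {q : ℝ} (hq : 1 ≤ q) {m : ℕ}
    (x : Fin m → EuclideanSpace ℂ (Fin N)) :
    ∑ i, ‖x i‖ ^ q ≤ √3 * (√N * weakNorm q x) ^ q := by
  have hkhintchine (i : Fin m) :
      2 ^ N * ‖x i‖ ^ q ≤ √3 * ∑ s, ‖inner ℂ (signVector s) (x i)‖ ^ q := by
    rw [EuclideanSpace.norm_eq, Real.sqrt_eq_rpow,
      ← Real.rpow_mul (sum_nonneg fun _ _ => by positivity)]
    simp only [inner_signVector]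
    convert two_pow_mul_rpow_le_sum_norm_signSum_rpow (fun k => x i k) hq using 3
    ring
  have hdual (s : Fin N → Bool) :
      ∑ i, ‖inner ℂ (signVector s) (x i)‖ ^ q ≤ (√N * weakNorm q x) ^ q := by
    simpa [norm_signVector] using
      sum_norm_rpow_le_opNorm_mul_weakNorm_rpow (by linarith) x (innerSL ℂ (signVector s))
  refine le_of_mul_le_mul_left ?_ (by positivity : (0 : ℝ) < 2 ^ N)
  calc 2 ^ N * ∑ i, ‖x i‖ ^ q = ∑ i, 2 ^ N * ‖x i‖ ^ q := mul_sum _ _ _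
    _ ≤ ∑ i, √3 * ∑ s, ‖inner ℂ (signVector s) (x i)‖ ^ q := sum_le_sum fun i _ => hkhintchine i
    _ = √3 * ∑ s, ∑ i, ‖inner ℂ (signVector s) (x i)‖ ^ q := by rw [← mul_sum, sum_comm]
    _ ≤ √3 * ∑ _s : Fin N → Bool, (√N * weakNorm q x) ^ q := by gcongr with s; exact hdual s
    _ = 2 ^ N * (√3 * (√N * weakNorm q x) ^ q) := by simp; ring

end Euclidean

/-- For `q ∈ (1, ∞)`, there is `C_q > 0` with
`π_q(id_{ℓ²_N}) ≤ C_q √N` for all `N`. -/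
theorem summingNorm_id_euclidean_le (q : ℝ) (hq : 1 < q) :
    ∃ C : ℝ, 0 < C ∧ ∀ N : ℕ,
      summingNorm q (ContinuousLinearMap.id ℂ (EuclideanSpace ℂ (Fin N)))
        ≤ C * Real.sqrt N := by
  refine ⟨√3, by positivity, fun N => summingNorm_le _ (by positivity) fun m x => ?_⟩
  have hW := weakNorm_nonneg (q := q) x
  have hq0 : 0 < q := by linarith
  have hroot : (√3) ^ (1 / q) ≤ √3 := by
    refine (Real.rpow_le_rpow_of_exponent_le (Real.one_le_sqrt.2 (by norm_num))
      ((div_le_one hq0).2 hq.le)).trans_eq (Real.rpow_one _)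
  simp only [ContinuousLinearMap.id_apply]
  calc (∑ i, ‖x i‖ ^ q) ^ (1 / q) ≤ (√3 * (√N * weakNorm q x) ^ q) ^ (1 / q) :=
        Real.rpow_le_rpow (sum_nonneg fun _ _ => by positivity)
          (sum_norm_rpow_euclidean_le hq.le x) (by positivity)
    _ = (√3) ^ (1 / q) * (√N * weakNorm q x) := by
        rw [Real.mul_rpow (by positivity) (by positivity), ← Real.rpow_mul (by positivity),
          mul_one_div_cancel hq0.ne', Real.rpow_one]
    _ ≤ √3 * √N * weakNorm q x := by rw [mul_assoc]; gcongr
end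

section
/- Let H be a finite-dimensional Hilbert space with orthonormal basis (e_λ)_{λ∈Λ}, |Λ| = d. If ξ ∈ H ⊗₂ H is a unit vector which, viewed as a Hilbert–Schmidt operator on H, has rank at most r, and ζ₁ = d^{−1/2} ∑_{λ∈Λ} e_λ ⊗ e_λ, then for every scalar α, d^{1/2} ‖ξ − α ζ₁‖ ≥ |α| d^{1/2} − r^{1/2}. -/
/-- The Frobenius (Hilbert–Schmidt) norm of a matrix. -/
noncomputable def frobNorm {Λ : Type*} [Fintype Λ] (A : Matrix Λ Λ ℂ) : ℝ :=
  Real.sqrt (∑ i, ∑ j, ‖A i j‖ ^ 2)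

/-!
Matrices over `Λ` model `H ⊗₂ H`, and `ζ₁` is `d^{-1/2} • 1`, so `Tr (α ζ₁) = α √d`.
Every matrix `T` satisfies `|Tr T| ≤ √(rank T) ‖T‖`: if `P` is the orthogonal projection onto
the range of `T`, then `T = P T`, so Cauchy–Schwarz for the Frobenius pairing gives
`|Tr T| ≤ ‖P‖ ‖T‖`, and `‖P‖² = Tr (P* P) = Tr P = rank T`.
Applied to `ξ` (rank `≤ r`, norm `1`) and to `ξ - α ζ₁` (rank `≤ d`), this bounds
`|α| √d = |Tr ξ - Tr (ξ - α ζ₁)|` by `√r + √d ‖ξ - α ζ₁‖`.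
-/

open Matrix

section

variable {Λ : Type*} [Fintype Λ]

lemma frobNorm_nonneg (A : Matrix Λ Λ ℂ) : 0 ≤ frobNorm A := Real.sqrt_nonneg _

lemma frobNorm_transpose (A : Matrix Λ Λ ℂ) : frobNorm Aᵀ = frobNorm A := by
  rw [frobNorm, frobNorm, Finset.sum_comm]
  rfl

lemma norm_trace_mul_le_frobNorm_mul_frobNorm (A B : Matrix Λ Λ ℂ) :
    ‖(A * B).trace‖ ≤ frobNorm A * frobNorm B := by
  calc ‖(A * B).trace‖ = ‖∑ i, ∑ j, A i j * B j i‖ := rfl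
    _ ≤ ∑ i, ∑ j, ‖A i j‖ * ‖B j i‖ :=
      (norm_sum_le _ _).trans <| Finset.sum_le_sum fun i _ =>
        (norm_sum_le _ _).trans_eq <| by simp only [norm_mul]
    _ = ∑ ij : Λ × Λ, ‖A ij.1 ij.2‖ * ‖Bᵀ ij.1 ij.2‖ := by
      rw [Fintype.sum_prod_type]
      rfl
    _ ≤ √(∑ ij : Λ × Λ, ‖A ij.1 ij.2‖ ^ 2) * √(∑ ij : Λ × Λ, ‖Bᵀ ij.1 ij.2‖ ^ 2) :=
      Real.sum_mul_le_sqrt_mul_sqrt _ _ _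
    _ = frobNorm A * frobNorm B := by
      rw [← frobNorm_transpose B, frobNorm, frobNorm, Fintype.sum_prod_type,
        Fintype.sum_prod_type]

lemma IsStarProjection.frobNorm_sq {p : Matrix Λ Λ ℂ} (hp : IsStarProjection p) :
    ((frobNorm p ^ 2 : ℝ) : ℂ) = p.trace := by
  have hpp : pᴴ * p = p := by
    rw [← star_eq_conjTranspose, hp.isSelfAdjoint.star_eq, hp.isIdempotentElem.eq]
  conv_rhs => rw [← hpp]
  rw [frobNorm, Real.sq_sqrt (by positivity), trace, Finset.sum_comm]
  push_cast
  simp only [diag_apply, mul_apply, conjTranspose_apply, RCLike.star_def, Complex.conj_mul']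

variable [DecidableEq Λ]

lemma exists_isStarProjection_mul_eq_self_and_trace_eq_rank (A : Matrix Λ Λ ℂ) :
    ∃ p : Matrix Λ Λ ℂ, IsStarProjection p ∧ p * A = A ∧ p.trace = A.rank := by
  let K := LinearMap.range (toEuclideanLin (𝕜 := ℂ) A)
  obtain ⟨p, hp⟩ : ∃ p, toEuclideanCLM (𝕜 := ℂ) p = K.starProjection :=
    toEuclideanCLM.surjective _
  have hpK : toEuclideanLin p = K.starProjection.toLinearMap := by
    rw [← coe_toEuclideanCLM_eq_toEuclideanLin, hp]
  refine ⟨p, ?_, ?_, ?_⟩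
  · refine ⟨EquivLike.injective (toEuclideanCLM (𝕜 := ℂ) (n := Λ)) ?_,
      EquivLike.injective (toEuclideanCLM (𝕜 := ℂ) (n := Λ)) ?_⟩
    · rw [map_mul, hp, K.isIdempotentElem_starProjection.eq]
    · rw [map_star, hp, (isSelfAdjoint_starProjection K).star_eq]
  · apply toEuclideanLin.injective
    ext1 x
    rw [toEuclideanLin_eq_toLin_orthonormal, toLin_mul _ (EuclideanSpace.basisFun Λ ℂ).toBasis,
      ← toEuclideanLin_eq_toLin_orthonormal, LinearMap.comp_apply, hpK]
    exact K.starProjection_eq_self_iff.mpr (LinearMap.mem_range_self _ x)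
  · have hproj : LinearMap.IsProj K K.starProjection.toLinearMap :=
      ⟨K.starProjection_apply_mem, fun _ => K.starProjection_eq_self_iff.mpr⟩
    rw [← trace_toLin_eq p (EuclideanSpace.basisFun Λ ℂ).toBasis,
      ← toEuclideanLin_eq_toLin_orthonormal, hpK, hproj.trace,
      A.rank_eq_finrank_range_toLin (EuclideanSpace.basisFun Λ ℂ).toBasis
        (EuclideanSpace.basisFun Λ ℂ).toBasis, ← toEuclideanLin_eq_toLin_orthonormal]

theorem norm_trace_le_sqrt_rank_mul_frobNorm (A : Matrix Λ Λ ℂ) :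
    ‖A.trace‖ ≤ √A.rank * frobNorm A := by
  obtain ⟨p, hp, hpA, htrace⟩ := exists_isStarProjection_mul_eq_self_and_trace_eq_rank A
  have hfrob : frobNorm p = √A.rank := by
    rw [← Real.sqrt_sq (frobNorm_nonneg p)]
    exact congrArg _ (by exact_mod_cast hp.frobNorm_sq.trans htrace)
  calc ‖A.trace‖ = ‖(p * A).trace‖ := by rw [hpA]
    _ ≤ frobNorm p * frobNorm A := norm_trace_mul_le_frobNorm_mul_frobNorm p A
    _ = √A.rank * frobNorm A := by rw [hfrob]

theorem norm_trace_le_sqrt_card_mul_frobNorm (A : Matrix Λ Λ ℂ) :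
    ‖A.trace‖ ≤ √(Fintype.card Λ) * frobNorm A :=
  (norm_trace_le_sqrt_rank_mul_frobNorm A).trans <| by
    have := frobNorm_nonneg A
    gcongr
    exact_mod_cast A.rank_le_card_width

end

/-- Let `H` be a `d`-dimensional Hilbert space with orthonormal
basis indexed by `Λ`, and identify `H ⊗₂ H` with the Hilbert–Schmidt operators
on `H`, i.e. with matrices over `Λ`.  If `ξ` is a unit vector of rank at most
`r` and `ζ₁ = d^{−1/2} ∑_λ e_λ ⊗ e_λ` (the matrix `d^{−1/2} · 1`), then for
every scalar `α`, `√d ‖ξ − α ζ₁‖ ≥ |α| √d − √r`. -/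
theorem dist_to_scaled_identity (Λ : Type*) [Fintype Λ] [DecidableEq Λ]
    (ξ : Matrix Λ Λ ℂ) (hnorm : frobNorm ξ = 1) (r : ℕ) (hrank : ξ.rank ≤ r)
    (α : ℂ) :
    Real.sqrt (Fintype.card Λ) *
        frobNorm (ξ - α • ((Real.sqrt (Fintype.card Λ) : ℂ)⁻¹ • (1 : Matrix Λ Λ ℂ)))
      ≥ ‖α‖ * Real.sqrt (Fintype.card Λ) - Real.sqrt r := by
  set ζ : Matrix Λ Λ ℂ := α • ((Real.sqrt (Fintype.card Λ) : ℂ)⁻¹ • 1)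
  have hζ : ‖ζ.trace‖ = ‖α‖ * √(Fintype.card Λ) := by
    rw [trace_smul, trace_smul, trace_one, smul_eq_mul, smul_eq_mul, norm_mul, norm_mul, norm_inv,
      Complex.norm_real, Complex.norm_natCast, Real.norm_of_nonneg (Real.sqrt_nonneg _),
      inv_mul_eq_div, Real.div_sqrt]
  have hξ : ‖ξ.trace‖ ≤ √r :=
    calc ‖ξ.trace‖ ≤ √ξ.rank * frobNorm ξ := norm_trace_le_sqrt_rank_mul_frobNorm ξ
      _ ≤ √r := by rw [hnorm, mul_one]; gcongr
  have htrace_bound : ‖α‖ * √(Fintype.card Λ) ≤ √r + √(Fintype.card Λ) * frobNorm (ξ - ζ) :=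
    calc ‖α‖ * √(Fintype.card Λ) = ‖ξ.trace - (ξ - ζ).trace‖ := by
          rw [trace_sub, sub_sub_cancel, hζ]
      _ ≤ ‖ξ.trace‖ + ‖(ξ - ζ).trace‖ := norm_sub_le _ _
      _ ≤ √r + √(Fintype.card Λ) * frobNorm (ξ - ζ) :=
        add_le_add hξ (norm_trace_le_sqrt_card_mul_frobNorm _)
  linarith
end

section
/- Let E be a Banach space, let a, b be bounded operators on ℓ²(ℕ) ⊕ E, and let P ∈ 𝓑(ℓ²(ℕ) ⊕ E) be the orthogonal-type projection onto the span of the first d coordinates of the ℓ² summand. Then ∑_{n=1}^∞ ‖P a e_n‖ ‖P* b* e_n*‖ ≤ d ‖a‖ ‖b‖, where (e_n) is the canonical basis of the ℓ² summand and (e_n*) the corresponding coordinate functionals. -/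
/-!
Write `eₙ = (δₙ, 0)` and `a' = fst ∘ a ∘ inl` for the compression of `a` to the `ℓ²` summand.
Then `‖P a eₙ‖² = ∑_{i<d} |⟪δᵢ, a' δₙ⟫|²` and, by Cauchy–Schwarz,
`‖eₙ* b P‖² ≤ ∑_{i<d} |⟪δₙ, b' δᵢ⟫|²`. Summing over `n`, Bessel's inequality bounds the first
sum by `∑_{i<d} ‖a'^* δᵢ‖² ≤ d ‖a‖²` and the second by `∑_{i<d} ‖b' δᵢ‖² ≤ d ‖b‖²`;
Cauchy–Schwarz in `n` concludes.
-/

open Finset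
open scoped InnerProductSpace lp

section Bessel

variable {𝕜 H K ι κ : Type*} [RCLike 𝕜]
  [NormedAddCommGroup H] [InnerProductSpace 𝕜 H] [NormedAddCommGroup K] [InnerProductSpace 𝕜 K]
  {v : ι → K} {w : κ → H}

theorem Orthonormal.sum_sum_norm_inner_apply_sq_le_left (hv : Orthonormal 𝕜 v)
    (hw : ∀ j, ‖w j‖ ≤ 1) (T : H →L[𝕜] K) (s : Finset ι) (t : Finset κ) :
    ∑ j ∈ t, ∑ i ∈ s, ‖⟪v i, T (w j)⟫_𝕜‖ ^ 2 ≤ #t * ‖T‖ ^ 2 := by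
  rw [← nsmul_eq_mul]
  refine sum_le_card_nsmul _ _ _ fun j _ => (hv.sum_inner_products_le _).trans ?_
  gcongr
  simpa using T.le_opNorm_of_le (hw j)

theorem Orthonormal.sum_sum_norm_inner_apply_sq_le_right [CompleteSpace H] [CompleteSpace K]
    (hw : Orthonormal 𝕜 w) (hv : ∀ i, ‖v i‖ ≤ 1) (T : H →L[𝕜] K) (s : Finset ι)
    (t : Finset κ) :
    ∑ j ∈ t, ∑ i ∈ s, ‖⟪v i, T (w j)⟫_𝕜‖ ^ 2 ≤ #s * ‖T‖ ^ 2 := by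
  have hadj : ∀ i j, ‖⟪v i, T (w j)⟫_𝕜‖ = ‖⟪w j, T.adjoint (v i)⟫_𝕜‖ := fun i j => by
    rw [← ContinuousLinearMap.adjoint_inner_left, norm_inner_symm]
  simp only [hadj]
  rw [sum_comm, ← LinearIsometryEquiv.norm_map ContinuousLinearMap.adjoint T]
  exact hw.sum_sum_norm_inner_apply_sq_le_left hv _ t s

end Bessel

theorem ContinuousLinearMap.opNorm_comp_sq_le_of_eq_sum_smul {𝕜 X Y ι : Type*} [RCLike 𝕜]
    [SeminormedAddCommGroup X] [NormedSpace 𝕜 X] [SeminormedAddCommGroup Y] [NormedSpace 𝕜 Y]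
    (φ : Y →L[𝕜] 𝕜) (P : X →L[𝕜] Y) (s : Finset ι) (c : ι → X → 𝕜) (u : ι → Y)
    (hP : ∀ z, P z = ∑ i ∈ s, c i z • u i) (hc : ∀ z, ∑ i ∈ s, ‖c i z‖ ^ 2 ≤ ‖z‖ ^ 2) :
    ‖φ.comp P‖ ^ 2 ≤ ∑ i ∈ s, ‖φ (u i)‖ ^ 2 := by
  suffices ‖φ.comp P‖ ≤ √(∑ i ∈ s, ‖φ (u i)‖ ^ 2) by
    exact (pow_le_pow_left₀ (norm_nonneg _) this 2).trans_eq (Real.sq_sqrt (by positivity))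
  refine φ.comp P |>.opNorm_le_bound (Real.sqrt_nonneg _) fun z => ?_
  calc ‖φ (P z)‖ = ‖∑ i ∈ s, c i z * φ (u i)‖ := by simp [hP]
    _ ≤ ∑ i ∈ s, ‖c i z‖ * ‖φ (u i)‖ := (norm_sum_le _ _).trans_eq (by simp)
    _ ≤ √(∑ i ∈ s, ‖c i z‖ ^ 2) * √(∑ i ∈ s, ‖φ (u i)‖ ^ 2) :=
      Real.sum_mul_le_sqrt_mul_sqrt _ _ _
    _ ≤ ‖z‖ * √(∑ i ∈ s, ‖φ (u i)‖ ^ 2) := by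
      gcongr
      exact (Real.sqrt_le_sqrt (hc z)).trans_eq (Real.sqrt_sq (norm_nonneg z))
    _ = _ := mul_comm _ _

theorem lp.orthonormal_single {𝕜 ι : Type*} [RCLike 𝕜] [DecidableEq ι] :
    Orthonormal 𝕜 fun i : ι => lp.single 2 i (1 : 𝕜) := by
  rw [orthonormal_iff_ite]
  intro i j
  rw [lp.inner_single_left, lp.single_apply, Pi.single_apply]
  split_ifs <;> simp_all

theorem lp.inner_single_one_left {𝕜 ι : Type*} [RCLike 𝕜] [DecidableEq ι] (i : ι)
    (f : ℓ²(ι, 𝕜)) : ⟪lp.single 2 i (1 : 𝕜), f⟫_𝕜 = f i := by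
  simp [lp.inner_single_left]

theorem lp.sum_norm_apply_sq_le {𝕜 ι : Type*} [RCLike 𝕜] (f : ℓ²(ι, 𝕜)) (s : Finset ι) :
    ∑ i ∈ s, ‖f i‖ ^ 2 ≤ ‖f‖ ^ 2 := by
  classical
  simpa [lp.inner_single_one_left] using lp.orthonormal_single.sum_inner_products_le f (s := s)

theorem ContinuousLinearMap.norm_fst_comp_comp_inl_le {𝕜 X Y : Type*} [RCLike 𝕜]
    [SeminormedAddCommGroup X] [NormedSpace 𝕜 X] [SeminormedAddCommGroup Y] [NormedSpace 𝕜 Y]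
    (a : X × Y →L[𝕜] X × Y) : ‖(fst 𝕜 X Y).comp (a.comp (inl 𝕜 X Y))‖ ≤ ‖a‖ := by
  calc _ ≤ ‖fst 𝕜 X Y‖ * (‖a‖ * ‖inl 𝕜 X Y‖) :=
        (opNorm_comp_le _ _).trans (by gcongr; exact opNorm_comp_le _ _)
    _ ≤ 1 * (‖a‖ * 1) := by gcongr <;> simp [norm_fst_le, norm_inl_le_one]
    _ = ‖a‖ := by ring

section Truncation

variable {𝕜 E : Type*} [RCLike 𝕜] [SeminormedAddCommGroup E]

def IsTruncation (d : ℕ) (P : ℓ²(ℕ, 𝕜) × E → ℓ²(ℕ, 𝕜) × E) : Prop :=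
  ∀ z, (P z).2 = 0 ∧ ∀ i, (P z).1 i = if i < d then z.1 i else 0

variable {d : ℕ}

theorem IsTruncation.fst_apply {P : ℓ²(ℕ, 𝕜) × E → ℓ²(ℕ, 𝕜) × E}
    (hP : IsTruncation d P) (z : ℓ²(ℕ, 𝕜) × E) :
    (P z).1 = ∑ i ∈ range d, lp.single 2 i (z.1 i) := by
  ext j
  rw [(hP z).2 j, lp.coeFn_sum, Finset.sum_apply]
  simp [lp.single_apply, Pi.single_apply]

theorem IsTruncation.apply_eq_sum_smul [NormedSpace 𝕜 E] {P : ℓ²(ℕ, 𝕜) × E → ℓ²(ℕ, 𝕜) × E}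
    (hP : IsTruncation d P) (z : ℓ²(ℕ, 𝕜) × E) :
    P z = ∑ i ∈ range d, z.1 i • ((lp.single 2 i 1, 0) : ℓ²(ℕ, 𝕜) × E) := by
  ext1
  · simp [hP.fst_apply, Prod.fst_sum, ← lp.single_smul]
  · simp [(hP z).1, Prod.snd_sum]

theorem IsTruncation.norm_apply_sq {P : ℓ²(ℕ, 𝕜) × E → ℓ²(ℕ, 𝕜) × E}
    (hP : IsTruncation d P) (z : ℓ²(ℕ, 𝕜) × E) :
    ‖P z‖ ^ 2 = ∑ i ∈ range d, ‖z.1 i‖ ^ 2 := by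
  have h := lp.norm_sum_single (p := 2) (by norm_num) (fun i => z.1 i) (range d)
  rw [Prod.norm_def, (hP z).1, norm_zero, max_eq_left (norm_nonneg _), hP.fst_apply]
  simpa using h

open ContinuousLinearMap in
theorem IsTruncation.sum_norm_apply_single_sq_le [NormedSpace 𝕜 E]
    {P : ℓ²(ℕ, 𝕜) × E → ℓ²(ℕ, 𝕜) × E} (hP : IsTruncation d P)
    (a : ℓ²(ℕ, 𝕜) × E →L[𝕜] ℓ²(ℕ, 𝕜) × E) (F : Finset ℕ) :
    ∑ n ∈ F, ‖P (a (lp.single 2 n 1, 0))‖ ^ 2 ≤ d * ‖a‖ ^ 2 := by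
  set a' := (fst 𝕜 _ E).comp (a.comp (inl 𝕜 _ E))
  have hδ := lp.orthonormal_single (𝕜 := 𝕜) (ι := ℕ)
  calc _ = ∑ n ∈ F, ∑ i ∈ range d, ‖⟪lp.single 2 i 1, a' (lp.single 2 n 1)⟫_𝕜‖ ^ 2 := by
        simp [a', hP.norm_apply_sq, lp.inner_single_one_left]
    _ ≤ d * ‖a'‖ ^ 2 := by
      simpa using hδ.sum_sum_norm_inner_apply_sq_le_right (fun i => (hδ.1 i).le) a' (range d) F
    _ ≤ d * ‖a‖ ^ 2 := by gcongr; exact norm_fst_comp_comp_inl_le a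

open ContinuousLinearMap in
theorem IsTruncation.sum_norm_coord_comp_sq_le [NormedSpace 𝕜 E]
    {P : ℓ²(ℕ, 𝕜) × E →L[𝕜] ℓ²(ℕ, 𝕜) × E} (hP : IsTruncation d P)
    (coord : ℕ → ℓ²(ℕ, 𝕜) × E →L[𝕜] 𝕜) (hcoord : ∀ n z, coord n z = z.1 n)
    (b : ℓ²(ℕ, 𝕜) × E →L[𝕜] ℓ²(ℕ, 𝕜) × E) (F : Finset ℕ) :
    ∑ n ∈ F, ‖(coord n).comp (b.comp P)‖ ^ 2 ≤ d * ‖b‖ ^ 2 := by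
  set b' := (fst 𝕜 _ E).comp (b.comp (inl 𝕜 _ E))
  have hδ := lp.orthonormal_single (𝕜 := 𝕜) (ι := ℕ)
  calc _ ≤ ∑ n ∈ F, ∑ i ∈ range d, ‖coord n (b (lp.single 2 i 1, 0))‖ ^ 2 := by
        refine sum_le_sum fun n _ => ((coord n).comp b).opNorm_comp_sq_le_of_eq_sum_smul P _ _ _
          hP.apply_eq_sum_smul fun z => (lp.sum_norm_apply_sq_le z.1 _).trans ?_
        gcongr
        exact norm_fst_le z
    _ = ∑ i ∈ range d, ∑ n ∈ F, ‖⟪lp.single 2 n 1, b' (lp.single 2 i 1)⟫_𝕜‖ ^ 2 := by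
      rw [sum_comm]
      simp [b', hcoord, lp.inner_single_one_left]
    _ ≤ d * ‖b'‖ ^ 2 := by
      simpa using hδ.sum_sum_norm_inner_apply_sq_le_left (fun i => (hδ.1 i).le) b' F (range d)
    _ ≤ d * ‖b‖ ^ 2 := by gcongr; exact norm_fst_comp_comp_inl_le b

end Truncation

theorem ozawa_hilbert_estimate_general (E : Type*) [NormedAddCommGroup E]
    [NormedSpace ℂ E] (d : ℕ)
    (a b : (lp (fun _ : ℕ => ℂ) 2 × E) →L[ℂ] (lp (fun _ : ℕ => ℂ) 2 × E))
    (P : (lp (fun _ : ℕ => ℂ) 2 × E) →L[ℂ] (lp (fun _ : ℕ => ℂ) 2 × E))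
    -- `P` is the projection onto the first `d` coordinates of the `ℓ²` summand:
    (hP : ∀ z : lp (fun _ : ℕ => ℂ) 2 × E, (P z).2 = 0 ∧
      ∀ i : ℕ, ((P z).1 : ∀ _ : ℕ, ℂ) i = if i < d then (z.1 : ∀ _ : ℕ, ℂ) i else 0)
    -- the coordinate functionals `eₙ*` of the `ℓ²` summand:
    (coord : ℕ → (lp (fun _ : ℕ => ℂ) 2 × E) →L[ℂ] ℂ)
    (hcoord : ∀ (n : ℕ) (z : lp (fun _ : ℕ => ℂ) 2 × E),
      coord n z = (z.1 : ∀ _ : ℕ, ℂ) n) :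
    ∀ F : Finset ℕ,
      ∑ n ∈ F, ‖P (a (lp.single 2 n 1, 0))‖ * ‖(coord n).comp (b.comp P)‖
        ≤ d * ‖a‖ * ‖b‖ := by
  intro F
  have hPt : IsTruncation d P := hP
  calc _ ≤ √(∑ n ∈ F, ‖P (a (lp.single 2 n 1, 0))‖ ^ 2) *
        √(∑ n ∈ F, ‖(coord n).comp (b.comp P)‖ ^ 2) := Real.sum_mul_le_sqrt_mul_sqrt _ _ _
    _ ≤ √(d * ‖a‖ ^ 2) * √(d * ‖b‖ ^ 2) := by
      gcongr
      exacts [hPt.sum_norm_apply_single_sq_le a F, hPt.sum_norm_coord_comp_sq_le coord hcoord b F]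
    _ = d * ‖a‖ * ‖b‖ := by
      rw [← Real.sqrt_mul (by positivity), show (d : ℝ) * ‖a‖ ^ 2 * (d * ‖b‖ ^ 2) =
        (d * ‖a‖ * ‖b‖) ^ 2 by ring, Real.sqrt_sq (by positivity)]

/-- Let `E` be a Banach space, `a, b` bounded operators on
`ℓ²(ℕ) ⊕ E`, and `P` the canonical projection onto the span of the first `d`
coordinates of the `ℓ²` summand.  Then
`∑ₙ ‖P a eₙ‖ ‖P* b* eₙ*‖ ≤ d ‖a‖ ‖b‖`, where `(eₙ)` is the canonical basis of
the `ℓ²` summand, `(eₙ*)` are the corresponding coordinate functionals, and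
`P* b* eₙ* = eₙ* ∘ b ∘ P`.  (The sum of nonnegative terms is expressed via
arbitrary finite partial sums.) -/
theorem ozawa_hilbert_estimate (E : Type*) [NormedAddCommGroup E]
    [NormedSpace ℂ E] [CompleteSpace E] (d : ℕ)
    (a b : (lp (fun _ : ℕ => ℂ) 2 × E) →L[ℂ] (lp (fun _ : ℕ => ℂ) 2 × E))
    (P : (lp (fun _ : ℕ => ℂ) 2 × E) →L[ℂ] (lp (fun _ : ℕ => ℂ) 2 × E))
    -- `P` is the projection onto the first `d` coordinates of the `ℓ²` summand:
    (hP : ∀ z : lp (fun _ : ℕ => ℂ) 2 × E, (P z).2 = 0 ∧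
      ∀ i : ℕ, ((P z).1 : ∀ _ : ℕ, ℂ) i = if i < d then (z.1 : ∀ _ : ℕ, ℂ) i else 0)
    -- the coordinate functionals `eₙ*` of the `ℓ²` summand:
    (coord : ℕ → (lp (fun _ : ℕ => ℂ) 2 × E) →L[ℂ] ℂ)
    (hcoord : ∀ (n : ℕ) (z : lp (fun _ : ℕ => ℂ) 2 × E),
      coord n z = (z.1 : ∀ _ : ℕ, ℂ) n) :
    ∀ F : Finset ℕ,
      ∑ n ∈ F, ‖P (a (lp.single 2 n 1, 0))‖ * ‖(coord n).comp (b.comp P)‖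
        ≤ d * ‖a‖ * ‖b‖ :=
  ozawa_hilbert_estimate_general E d a b P hP coord hcoord
end
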